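/- Let L be a number field, let n ≥ 1 and 1 ≤ i ≤ n be integers, and set j = n + 1 − i. For any algebraic integers β₀, …, βₙ ∈ O_L with β₀ + ⋯ + βₙ = 0 one has 2 Σ_σ [ Σ_{0 ≤ k ≤ i−1} (j/(n+1)) Re σ(β_k) − Σ_{i ≤ k ≤ n} (i/(n+1)) Re σ(β_k) ] ≤ Σ_σ Σ_{0 ≤ k ≤ n} |σ(β_k)|², where σ ranges over all field embeddings of L into ℂ. -/

import Mathlib

/-!
Put `γ_k = [k < i] - β_k`. Since the `β_k` sum to zero and the weights `j/(n+1)` and `i/(n+1)`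
add up to one, the inequality is equivalent to `T ≥ d · i`, where `T = Σ_σ Σ_k |σ(γ_k)|²`,
`d = [L:ℚ]` and `Σ_k γ_k = i`. If `s` of the `γ_k` are nonzero, then `T ≥ d s`, because AM–GM
and `|N(γ)| ≥ 1` give `Σ_σ |σ γ|² ≥ d` for every nonzero algebraic integer `γ`, and `s T ≥ d i²`,
by Cauchy–Schwarz applied to `i = Σ_k σ(γ_k)` for each `σ`. Hence `T² ≥ d² i²`.
-/

open NumberField Finset

lemma card_le_sum_of_one_le_prod {ι : Type*} [Fintype ι] {z : ι → ℝ} (hz : ∀ i, 0 ≤ z i)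
    (h : 1 ≤ ∏ i, z i) : (Fintype.card ι : ℝ) ≤ ∑ i, z i := by
  cases isEmpty_or_nonempty ι
  · simp
  have hcard : (0 : ℝ) < Fintype.card ι := by exact_mod_cast Fintype.card_pos
  have amgm := Real.geom_mean_le_arith_mean univ (fun _ => 1) z (fun _ _ => zero_le_one)
    (by simpa using hcard) (fun i _ => hz i)
  simp only [Real.rpow_one, sum_const, card_univ, nsmul_eq_mul, mul_one, one_mul] at amgm
  rw [le_div_iff₀ hcard] at amgm
  nlinarith [Real.one_le_rpow h (inv_nonneg.2 hcard.le)]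

lemma norm_sum_sq_le_card_mul_sum_norm_sq {ι E : Type*} [Fintype ι] [SeminormedAddCommGroup E]
    (z : ι → E) (s : Finset ι) (hs : ∀ i ∉ s, z i = 0) :
    ‖∑ i, z i‖ ^ 2 ≤ #s * ∑ i, ‖z i‖ ^ 2 := by
  have hsum : ∑ i, z i = ∑ i ∈ s, z i :=
    (sum_subset (subset_univ s) fun i _ hi => hs i hi).symm
  have hsq : ∑ i ∈ s, ‖z i‖ ^ 2 ≤ ∑ i, ‖z i‖ ^ 2 :=
    sum_le_sum_of_subset_of_nonneg (subset_univ s) fun _ _ _ => sq_nonneg _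
  calc ‖∑ i, z i‖ ^ 2 ≤ (∑ i ∈ s, ‖z i‖) ^ 2 := by
        rw [hsum]; gcongr; exact norm_sum_le _ _
    _ ≤ #s * ∑ i ∈ s, ‖z i‖ ^ 2 := sq_sum_le_card_mul_sum_sq
    _ ≤ #s * ∑ i, ‖z i‖ ^ 2 := by gcongr

lemma Complex.norm_one_sub_sq (z : ℂ) : ‖1 - z‖ ^ 2 = ‖z‖ ^ 2 + (1 - 2 * z.re) := by
  rw [Complex.sq_norm, Complex.sq_norm, Complex.normSq_sub]
  simp only [map_one, one_mul, Complex.conj_re]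
  ring

lemma mul_sum_filter_sub_mul_sum_filter_not {ι : Type*} (s : Finset ι) (p : ι → Prop)
    [DecidablePred p] {x : ι → ℝ} (hx : ∑ k ∈ s, x k = 0) {a b : ℝ} (hab : a + b = 1) :
    ∑ k ∈ s.filter p, a * x k - ∑ k ∈ s.filter (fun k => ¬p k), b * x k =
      ∑ k ∈ s.filter p, x k := by
  rw [← mul_sum, ← mul_sum]
  have hsplit := sum_filter_add_sum_filter_not s p x
  linear_combination (∑ k ∈ s.filter p, x k) * hab - b * hsplit - b * hx

namespace NumberField

variable {L : Type*} [Field L] [NumberField L]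

lemma prod_norm_embeddings_eq_abs_norm (x : L) :
    ∏ σ : L →+* ℂ, ‖σ x‖ = |(Algebra.norm ℚ x : ℝ)| := by
  rw [Fintype.prod_equiv (RingHom.equivRatAlgHom L ℂ) (fun σ => ‖σ x‖) (fun φ => ‖φ x‖)
    fun _ => by simp [RingHom.equivRatAlgHom_apply], ← norm_prod,
    ← Algebra.norm_eq_prod_embeddings ℚ ℂ x, eq_ratCast, ← Complex.ofReal_ratCast,
    Complex.norm_real, Real.norm_eq_abs]

lemma one_le_abs_norm {γ : 𝓞 L} (hγ : γ ≠ 0) : 1 ≤ |(Algebra.norm ℚ (γ : L) : ℝ)| := by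
  rw [← Algebra.coe_norm_int, Rat.cast_intCast, ← Int.cast_one, ← Int.cast_abs, Int.cast_le]
  exact Int.one_le_abs (Algebra.norm_ne_zero_iff.mpr hγ)

lemma card_embeddings_le_sum_norm_sq {γ : 𝓞 L} (hγ : γ ≠ 0) :
    (Fintype.card (L →+* ℂ) : ℝ) ≤ ∑ σ : L →+* ℂ, ‖σ γ‖ ^ 2 :=
  card_le_sum_of_one_le_prod (fun _ => sq_nonneg _) <| by
    rw [prod_pow, prod_norm_embeddings_eq_abs_norm]
    exact one_le_pow₀ (one_le_abs_norm hγ)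

lemma card_embeddings_mul_abs_le_sum_sum_norm_sq {ι : Type*} [Fintype ι] (γ : ι → 𝓞 L) (c : ℤ)
    (hγ : ∑ k, γ k = c) :
    (Fintype.card (L →+* ℂ) : ℝ) * |(c : ℝ)| ≤ ∑ σ : L →+* ℂ, ∑ k, ‖σ (γ k)‖ ^ 2 := by
  classical
  set d : ℝ := (Fintype.card (L →+* ℂ) : ℝ)
  set T := ∑ σ : L →+* ℂ, ∑ k, ‖σ (γ k)‖ ^ 2
  set s := ({k | γ k ≠ 0} : Finset ι)
  have hT : 0 ≤ T := by positivity
  have hsT : d * #s ≤ T := calc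
    d * #s = ∑ _k ∈ s, d := by rw [sum_const, nsmul_eq_mul, mul_comm]
    _ ≤ ∑ k ∈ s, ∑ σ : L →+* ℂ, ‖σ (γ k)‖ ^ 2 :=
      sum_le_sum fun k hk => card_embeddings_le_sum_norm_sq (mem_filter.1 hk).2
    _ ≤ ∑ k, ∑ σ : L →+* ℂ, ‖σ (γ k)‖ ^ 2 :=
      sum_le_sum_of_subset_of_nonneg (subset_univ s) fun _ _ _ => by positivity
    _ = T := sum_comm
  have hcT : d * c ^ 2 ≤ #s * T := calc
    d * c ^ 2 = ∑ σ : L →+* ℂ, ‖σ (∑ k, (γ k : L))‖ ^ 2 := by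
      simp [← map_sum, hγ, d]
    _ ≤ ∑ σ : L →+* ℂ, #s * ∑ k, ‖σ (γ k)‖ ^ 2 := by
      refine sum_le_sum fun σ _ => ?_
      rw [map_sum]
      refine norm_sum_sq_le_card_mul_sum_norm_sq _ s fun k hk => ?_
      have hγk : γ k = 0 := by simpa [s] using hk
      simp [hγk]
    _ = #s * T := by rw [mul_sum]
  rw [← pow_le_pow_iff_left₀ (by positivity) hT two_ne_zero]
  calc (d * |(c : ℝ)|) ^ 2 = d * (d * c ^ 2) := by rw [mul_pow, sq_abs]; ring
    _ ≤ d * (#s * T) := by gcongr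
    _ = (d * #s) * T := by ring
    _ ≤ T ^ 2 := by rw [sq]; gcongr

theorem two_mul_sum_sum_re_le {ι : Type*} [Fintype ι] (β : ι → 𝓞 L) (hβ : ∑ k, β k = 0)
    (F : Finset ι) :
    2 * ∑ σ : L →+* ℂ, ∑ k ∈ F, (σ (β k)).re ≤ ∑ σ : L →+* ℂ, ∑ k, ‖σ (β k)‖ ^ 2 := by
  classical
  set γ : ι → 𝓞 L := fun k => (if k ∈ F then 1 else 0) - β k
  have hγ : ∑ k, γ k = ((#F : ℤ) : 𝓞 L) := by
    simp [γ, sum_sub_distrib, hβ]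
  have hnorm (σ : L →+* ℂ) (k : ι) :
      ‖σ (γ k)‖ ^ 2 = ‖σ (β k)‖ ^ 2 + if k ∈ F then 1 - 2 * (σ (β k)).re else 0 := by
    by_cases hk : k ∈ F <;> simp [γ, hk, Complex.norm_one_sub_sq]
  have hT : ∑ σ : L →+* ℂ, ∑ k, ‖σ (γ k)‖ ^ 2 = ∑ σ : L →+* ℂ, ∑ k, ‖σ (β k)‖ ^ 2 +
      (Fintype.card (L →+* ℂ) * #F - 2 * ∑ σ : L →+* ℂ, ∑ k ∈ F, (σ (β k)).re) := by
    simp [hnorm, sum_add_distrib, sum_ite_mem, sum_sub_distrib, ← mul_sum]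
  have hbound := card_embeddings_mul_abs_le_sum_sum_norm_sq γ _ hγ
  rw [Int.cast_natCast, Nat.abs_cast] at hbound
  linarith

end NumberField

theorem statement4_general (L : Type*) [Field L] [NumberField L] (n i : ℕ)
    (β : Fin (n + 1) → 𝓞 L)
    (hsum : ∑ k, β k = 0) :
    2 * ∑ σ : L →+* ℂ,
        ((∑ k ∈ Finset.univ.filter (fun k : Fin (n + 1) => (k : ℕ) < i),
            (((n : ℝ) + 1 - i) / ((n : ℝ) + 1)) * (σ (β k : L)).re) -
          ∑ k ∈ Finset.univ.filter (fun k : Fin (n + 1) => i ≤ (k : ℕ)),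
            ((i : ℝ) / ((n : ℝ) + 1)) * (σ (β k : L)).re) ≤
      ∑ σ : L →+* ℂ, ∑ k : Fin (n + 1), ‖σ (β k : L)‖ ^ 2 := by
  have hre (σ : L →+* ℂ) : ∑ k, (σ (β k)).re = 0 := by
    rw [← Complex.re_sum, ← map_sum, ← map_sum, hsum, map_zero, map_zero, Complex.zero_re]
  have hweights : ((n : ℝ) + 1 - i) / ((n : ℝ) + 1) + (i : ℝ) / ((n : ℝ) + 1) = 1 := by
    field_simp; ring
  have hinner (σ : L →+* ℂ) := mul_sum_filter_sub_mul_sum_filter_not univ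
    (fun k : Fin (n + 1) => (k : ℕ) < i) (hre σ) hweights
  simp only [not_lt] at hinner
  rw [sum_congr rfl fun σ _ => hinner σ]
  exact NumberField.two_mul_sum_sum_re_le β hsum _

/-- Lemma 5.13 (the condition P(L/ℚ, Aₙ) at the vertex [i] of the Voronoi cell of the
root lattice Aₙ): for algebraic integers `β₀, …, βₙ` with zero sum, and `1 ≤ i ≤ n`,
`j = n + 1 − i`,
`2 Σ_σ [Σ_{k<i} (j/(n+1)) Re σ(β_k) − Σ_{k≥i} (i/(n+1)) Re σ(β_k)] ≤ Σ_σ Σ_k |σ(β_k)|²`. -/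
theorem statement4 (L : Type*) [Field L] [NumberField L] (n i : ℕ) (hn : 1 ≤ n)
    (hi : 1 ≤ i) (hin : i ≤ n) (β : Fin (n + 1) → 𝓞 L)
    (hsum : ∑ k, β k = 0) :
    2 * ∑ σ : L →+* ℂ,
        ((∑ k ∈ Finset.univ.filter (fun k : Fin (n + 1) => (k : ℕ) < i),
            (((n : ℝ) + 1 - i) / ((n : ℝ) + 1)) * (σ (β k : L)).re) -
          ∑ k ∈ Finset.univ.filter (fun k : Fin (n + 1) => i ≤ (k : ℕ)),
            ((i : ℝ) / ((n : ℝ) + 1)) * (σ (β k : L)).re) ≤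
      ∑ σ : L →+* ℂ, ∑ k : Fin (n + 1), ‖σ (β k : L)‖ ^ 2 :=
  statement4_general L n i β hsum
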